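/- Let (X,ρ) be a metric space and let P be an abstract porosity on X. If a set A ⊆ X is σ-P-porous at each of its points (i.e., for every x ∈ A there is r > 0 such that A ∩ B(x,r) is σ-P-porous), then A is σ-P-porous. -/

import Mathlib

open Metric Filter Set

/-- An abstract porosity on a metric space `X`: a relation between points and subsets
of `X` satisfying the axioms (A1), (A2), (A3). -/
structure AbstractPorosity (X : Type*) [MetricSpace X] where
  rel : X → Set X → Prop
  mono : ∀ (x : X) (A B : Set X), A ⊆ B → rel x B → rel x A
  loc : ∀ (x : X) (A : Set X), rel x A ↔ ∃ r > 0, rel x (A ∩ Metric.ball x r)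
  clos : ∀ (x : X) (A : Set X), rel x A ↔ rel x (closure A)

variable {X : Type*} [MetricSpace X]

/-- `A` is `P`-porous if `P(x,A)` holds at each point `x ∈ A`. -/
def AbstractPorosity.Porous (P : AbstractPorosity X) (A : Set X) : Prop :=
  ∀ x ∈ A, P.rel x A

/-- `A` is σ-`P`-porous if it is a countable union of `P`-porous sets. -/
def AbstractPorosity.SigmaPorous (P : AbstractPorosity X) (A : Set X) : Prop :=
  ∃ f : ℕ → Set X, (∀ n, P.Porous (f n)) ∧ A = ⋃ n, f n

/-- `A` is σ-`P`-porous at `x` if some `A ∩ B(x,r)` (r>0) is σ-`P`-porous. -/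
def AbstractPorosity.SigmaPorousAt (P : AbstractPorosity X) (A : Set X) (x : X) : Prop :=
  ∃ r > 0, P.SigmaPorous (A ∩ Metric.ball x r)

/-- The kernel `K_P(A)`: points of `A` at which `A` is not σ-`P`-porous. -/
def AbstractPorosity.kernel (P : AbstractPorosity X) (A : Set X) : Set X :=
  {x ∈ A | ¬ P.SigmaPorousAt A x}

/-!
The key step is the case of a uniform radius: if `s ∩ B(x, r)` is σ-porous for every `x ∈ s`,
then `s` is σ-porous. By Stone's construction (well-order `s`, attach each point to the least
point of `s` within distance `r`), the cover of `s` by these balls is refined by countably many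
uniformly discrete families, and porosity is local by (A1)–(A2), so the union of a uniformly
discrete family of porous sets is porous. In general, the points of `A` at which the radius
`1/(k+1)` works form a σ-porous set for each `k`, and they exhaust `A`.
-/

def UniformlyDiscreteFamily {ι : Type*} (S : ι → Set X) : Prop :=
  ∃ ε > 0, Pairwise fun i j => ∀ z ∈ S i, ∀ w ∈ S j, ε ≤ dist z w

theorem UniformlyDiscreteFamily.mono {ι : Type*} {S T : ι → Set X}
    (hS : UniformlyDiscreteFamily S) (hTS : ∀ i, T i ⊆ S i) : UniformlyDiscreteFamily T := by
  obtain ⟨ε, hε, hsep⟩ := hS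
  exact ⟨ε, hε, fun i j hij z hz w hw => hsep hij z (hTS i hz) w (hTS j hw)⟩

section StoneCover

variable [LinearOrder X]

/-- The members, indexed by `x`, of the scale-`ε` family in Stone's refinement of the cover of `s`
by `r`-balls. -/
def stonePiece (s : Set X) (r ε : ℝ) (x : X) : Set X :=
  {z | ∃ c, IsLeast {y ∈ s | dist c y < r} x ∧ dist c x + 3 * ε ≤ r ∧ dist z c < ε}

theorem stonePiece_subset_ball (s : Set X) (r ε : ℝ) (x : X) :
    stonePiece s r ε x ⊆ ball x r := by
  rintro z ⟨c, -, hcx, hzc⟩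
  calc dist z x ≤ dist z c + dist c x := dist_triangle _ _ _
    _ < r := by linarith [dist_nonneg (x := z) (y := c)]

theorem le_dist_of_mem_stonePiece_of_lt {s : Set X} {r ε : ℝ} {x x' z w : X}
    (hxx' : x < x') (hz : z ∈ stonePiece s r ε x) (hw : w ∈ stonePiece s r ε x') :
    ε ≤ dist z w := by
  obtain ⟨c, hx, hcx, hzc⟩ := hz
  obtain ⟨c', hx', -, hwc'⟩ := hw
  -- `x ∈ s` precedes the least `r`-neighbour `x'` of `c'`, so it is not an `r`-neighbour of `c'`.
  have hc'x : r ≤ dist c' x := not_lt.1 fun h => (hx'.2 ⟨hx.1.1, h⟩).not_gt hxx'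
  linarith [dist_triangle4 c' w z x, dist_triangle z c x, dist_comm c' w, dist_comm w z]

theorem le_dist_of_mem_stonePiece {s : Set X} {r ε : ℝ} {x x' z w : X}
    (hxx' : x ≠ x') (hz : z ∈ stonePiece s r ε x) (hw : w ∈ stonePiece s r ε x') :
    ε ≤ dist z w := by
  rcases hxx'.lt_or_gt with h | h
  · exact le_dist_of_mem_stonePiece_of_lt h hz hw
  · exact dist_comm w z ▸ le_dist_of_mem_stonePiece_of_lt h hw hz

theorem subset_iUnion_stonePiece [WellFoundedLT X] (s : Set X) {r : ℝ} (hr : 0 < r) :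
    s ⊆ ⋃ n : ℕ, ⋃ x : s, stonePiece s r (1 / (n + 1)) x := by
  intro z hz
  set t := {y ∈ s | dist z y < r}
  have ht : z ∈ t := ⟨hz, by simpa using hr⟩
  set x := wellFounded_lt.min t ⟨z, ht⟩
  have hx : IsLeast t x := ⟨wellFounded_lt.min_mem t _, fun y hy => wellFounded_lt.min_le hy⟩
  obtain ⟨n, hn⟩ := exists_nat_one_div_lt (by linarith [hx.1.2] : 0 < (r - dist z x) / 3)
  exact mem_iUnion.2 ⟨n, mem_iUnion.2 ⟨⟨x, hx.1.1⟩, z, hx, by linarith, by rw [dist_self]; positivity⟩⟩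

end StoneCover

theorem exists_uniformlyDiscreteFamily_cover_ball (s : Set X) {r : ℝ} (hr : 0 < r) :
    ∃ D : ℕ → s → Set X, (∀ n, UniformlyDiscreteFamily (D n)) ∧
      s ⊆ ⋃ n, ⋃ x, D n x ∧ ∀ n x, D n x ⊆ ball (x : X) r := by
  let := IsWellOrder.linearOrder (WellOrderingRel (α := X))
  have : WellFoundedLT X := ⟨WellOrderingRel.isWellOrder.wf⟩
  refine ⟨fun n x => stonePiece s r (1 / (n + 1)) x, fun n => ⟨1 / (n + 1), by positivity, ?_⟩,
    subset_iUnion_stonePiece s hr, fun n x => stonePiece_subset_ball s r _ x⟩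
  exact fun x y hxy z hz w hw => le_dist_of_mem_stonePiece (Subtype.coe_injective.ne hxy) hz hw

namespace AbstractPorosity

variable {P : AbstractPorosity X}

theorem SigmaPorous.mono {A B : Set X} (hB : P.SigmaPorous B) (hAB : A ⊆ B) :
    P.SigmaPorous A := by
  obtain ⟨f, hf, rfl⟩ := hB
  refine ⟨fun n => A ∩ f n, fun n x hx => P.mono x _ _ inter_subset_right (hf n x hx.2), ?_⟩
  rw [← inter_iUnion, inter_eq_left.2 hAB]

theorem sigmaPorous_iUnion {ι : Type*} [Countable ι] {S : ι → Set X}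
    (h : ∀ i, P.SigmaPorous (S i)) : P.SigmaPorous (⋃ i, S i) := by
  choose f hf hfS using h
  rcases isEmpty_or_nonempty ι with hι | hι
  · exact ⟨fun _ => ∅, fun _ _ hx => hx.elim, by simp⟩
  obtain ⟨e, he⟩ := exists_surjective_nat (ι × ℕ)
  refine ⟨fun k => f (e k).1 (e k).2, fun k => hf _ _, ?_⟩
  rw [he.iUnion_comp (fun p => f p.1 p.2), iUnion_prod']
  simp_rw [hfS]

theorem porous_iUnion_of_uniformlyDiscreteFamily {ι : Type*} {S : ι → Set X}
    (h : ∀ i, P.Porous (S i)) (hS : UniformlyDiscreteFamily S) : P.Porous (⋃ i, S i) := by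
  obtain ⟨ε, hε, hsep⟩ := hS
  intro z hz
  obtain ⟨i, hzi⟩ := mem_iUnion.1 hz
  have hloc : (⋃ j, S j) ∩ ball z ε ⊆ S i := by
    rintro w ⟨hw, hwz⟩
    obtain ⟨j, hwj⟩ := mem_iUnion.1 hw
    by_cases hij : i = j
    · exact hij ▸ hwj
    · exact absurd (hsep hij z hzi w hwj) (not_le.2 (mem_ball'.1 hwz))
  exact (P.loc z _).2 ⟨ε, hε, P.mono z _ _ hloc (h i z hzi)⟩

theorem sigmaPorous_iUnion_of_uniformlyDiscreteFamily {ι : Type*} {S : ι → Set X}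
    (h : ∀ i, P.SigmaPorous (S i)) (hS : UniformlyDiscreteFamily S) :
    P.SigmaPorous (⋃ i, S i) := by
  choose f hf hfS using h
  refine ⟨fun m => ⋃ i, f i m, fun m => porous_iUnion_of_uniformlyDiscreteFamily (hf · m)
    (hS.mono fun i => (hfS i).symm ▸ subset_iUnion (f i) m), ?_⟩
  simp_rw [hfS]
  exact iUnion_comm _

theorem sigmaPorous_of_forall_sigmaPorous_inter_ball {s : Set X} {r : ℝ} (hr : 0 < r)
    (h : ∀ x ∈ s, P.SigmaPorous (s ∩ ball x r)) : P.SigmaPorous s := by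
  obtain ⟨D, hD, hsD, hDr⟩ := exists_uniformlyDiscreteFamily_cover_ball s hr
  have hcover : s ⊆ ⋃ n, ⋃ x : s, s ∩ D n x := fun z hz => by
    simpa only [← inter_iUnion] using ⟨hz, hsD hz⟩
  refine SigmaPorous.mono (sigmaPorous_iUnion fun n => ?_) hcover
  exact sigmaPorous_iUnion_of_uniformlyDiscreteFamily
    (fun x => (h x x.2).mono (inter_subset_inter_right s (hDr n x)))
    ((hD n).mono fun _ => inter_subset_right)

end AbstractPorosity

theorem sigmaPorous_of_forall_sigmaPorousAt {X : Type*} [MetricSpace X]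
    (P : AbstractPorosity X) (A : Set X) (h : ∀ x ∈ A, P.SigmaPorousAt A x) :
    P.SigmaPorous A := by
  set A' : ℕ → Set X := fun k => {x ∈ A | P.SigmaPorous (A ∩ ball x (1 / (k + 1)))}
  have hA' : ∀ k, P.SigmaPorous (A' k) := fun k =>
    AbstractPorosity.sigmaPorous_of_forall_sigmaPorous_inter_ball (by positivity) fun x hx =>
      hx.2.mono (inter_subset_inter_left _ fun _ hy => hy.1)
  refine (AbstractPorosity.sigmaPorous_iUnion hA').mono fun x hx => ?_
  obtain ⟨r, hr, hAr⟩ := h x hx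
  obtain ⟨k, hk⟩ := exists_nat_one_div_lt hr
  exact mem_iUnion.2 ⟨k, hx, hAr.mono (inter_subset_inter_right _ (ball_subset_ball hk.le))⟩
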